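/- Let B, X be basic hoops, let (f, g) be a strong external action of B on X, and let Y' = {(x, b) ∈ X × B | f_b(x) = x} be the associated hoop with operations (x, b) → (y, b') = (g_{b'→b}(x → y), b → b') and (x, b) · (y, b') = (f_{b·b'}(x · y), b · b'). Then for all (x, b), (y, b') ∈ Y': (x, b) · ((x, b) → (y, b')) = (f_{b∧b'}(x ∧ y), b ∧ b'), and (((x, b) → (y, b')) → (y, b')) ∧ (((y, b') → (x, b)) → (x, b)) = (f_{b∨b'}((g_{b'→b}(x → y) → y) ∧ (g_{b→b'}(y → x) → x)), b ∨ b'), where in any hoop u ∧ v := u · (u → v) and in a basic hoop u ∨ v := ((u → v) → v) ∧ ((v → u) → u). -/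

import Mathlib

class Hoop (α : Type*) extends CommMonoid α, HImp α where
  himp_self : ∀ x : α, x ⇨ x = 1
  mul_himp_comm : ∀ x y : α, x * (x ⇨ y) = y * (y ⇨ x)
  mul_himp_assoc : ∀ x y z : α, (x * y) ⇨ z = x ⇨ (y ⇨ z)

/-- A basic hoop: a hoop satisfying `((x → y) → z) → (((y → x) → z) → z) = 1`. -/
class BasicHoop (α : Type*) extends Hoop α where
  basic : ∀ x y z : α, ((x ⇨ y) ⇨ z) ⇨ (((y ⇨ x) ⇨ z) ⇨ z) = 1

/-- The meet `u ∧ v := u · (u → v)` of a hoop. -/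
def hmeet {α : Type*} [Hoop α] (x y : α) : α := x * (x ⇨ y)

/-- The join `u ∨ v := ((u → v) → v) ∧ ((v → u) → u)` of a basic hoop. -/
def hjoin {α : Type*} [Hoop α] (x y : α) : α :=
  hmeet ((x ⇨ y) ⇨ y) ((y ⇨ x) ⇨ x)

/-- The multiplication of the semidirect product of a strong external action. -/
def Amul {B X : Type*} [Hoop B] [Hoop X] (f : B → X → X) (q r : X × B) : X × B :=
  (f (q.2 * r.2) (q.1 * r.1), q.2 * r.2)

/-- The implication of the semidirect product of a strong external action. -/
def Aimp {B X : Type*} [Hoop B] [Hoop X] (g : B → X → X) (q r : X × B) : X × B :=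
  (g (r.2 ⇨ q.2) (q.1 ⇨ r.1), q.2 ⇨ r.2)

/-- The meet `u ∧ v := u · (u → v)` of the semidirect product hoop. -/
def Ameet {B X : Type*} [Hoop B] [Hoop X] (f g : B → X → X) (q r : X × B) : X × B :=
  Amul f q (Aimp g q r)

/-- The join `u ∨ v := ((u → v) → v) ∧ ((v → u) → u)` of the semidirect product hoop. -/
def Ajoin {B X : Type*} [Hoop B] [Hoop X] (f g : B → X → X) (q r : X × B) : X × B :=
  Ameet f g (Aimp g (Aimp g q r) r) (Aimp g (Aimp g r q) q)

/-!
The meet formula is axiom (E3) for `b₁ = b' → b`, `b₂ = b'`, because `(b' → b) · b' = b ∧ b'`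
by the commutativity of the hoop meet. For the join, the two inner implications
`(x, b) → (y, b') → (y, b')` and `(y, b') → (x, b) → (x, b)` have second component of the
shape `b' → ((b → b') → b') = 1`, so by (E2) the action `g` disappears from their first
components, and the join is again an instance of the meet formula.
-/

namespace Hoop

variable {α : Type*} [Hoop α]

theorem himp_left_comm (x y z : α) : x ⇨ (y ⇨ z) = y ⇨ (x ⇨ z) := by
  rw [← mul_himp_assoc, mul_comm, mul_himp_assoc]

theorem one_himp_himp (y z : α) : (1 : α) ⇨ (y ⇨ z) = y ⇨ z := by
  rw [← mul_himp_assoc, one_mul]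

theorem mul_himp_one (x : α) : x * (x ⇨ 1) = 1 ⇨ x := by
  rw [mul_himp_comm, one_mul]

theorem one_himp (x : α) : (1 : α) ⇨ x = x := by
  have hx : x ⇨ ((1 : α) ⇨ x) = 1 := by rw [himp_left_comm, himp_self, himp_self]
  have hxx : ((1 : α) ⇨ x) ⇨ x = (x ⇨ 1) ⇨ 1 := by
    rw [← mul_himp_one, mul_himp_assoc, himp_left_comm, himp_self]
  have hdup : (x ⇨ 1) * ((x ⇨ 1) ⇨ 1) = x ⇨ 1 := by
    rw [mul_himp_one, one_himp_himp]
  -- both sides of `mul_himp_comm (1 ⇨ x) x` collapse: one to `x`, the other to `1 ⇨ x`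
  calc (1 : α) ⇨ x = x * (x ⇨ 1) := (mul_himp_one x).symm
    _ = ((1 : α) ⇨ x) * (((1 : α) ⇨ x) ⇨ x) := by rw [hxx, ← mul_himp_one, mul_assoc, hdup]
    _ = x := by rw [mul_himp_comm, hx, mul_one]

theorem himp_one (x : α) : x ⇨ (1 : α) = 1 := by
  calc x ⇨ (1 : α) = (x * (x ⇨ 1)) ⇨ 1 := by rw [mul_himp_one, one_himp]
    _ = (x ⇨ 1) ⇨ (x ⇨ 1) := by rw [mul_comm, mul_himp_assoc]
    _ = 1 := himp_self _

theorem himp_himp_self (x y : α) : x ⇨ (y ⇨ x) = 1 := by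
  rw [himp_left_comm, himp_self, himp_one]

theorem hmeet_eq_himp_mul (x y : α) : hmeet x y = (y ⇨ x) * y := by
  rw [hmeet, mul_himp_comm, mul_comm]

end Hoop

section SemidirectProduct

variable {B X : Type*} [Hoop B] [Hoop X] (f g : B → X → X)

theorem Ameet_mk
    (E3 : ∀ (b₁ b₂ : B) (x y : X),
      f (b₁ * b₂) (x * g b₁ (x ⇨ y)) = f (b₁ * b₂) (x * (x ⇨ y)))
    (x y : X) (b b' : B) :
    Ameet f g (x, b) (y, b') = (f (hmeet b b') (hmeet x y), hmeet b b') := by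
  have h := E3 (b' ⇨ b) b' x y
  rw [← Hoop.hmeet_eq_himp_mul] at h
  exact Prod.ext h rfl

theorem Aimp_Aimp_mk (E2g : ∀ x : X, g 1 x = x) (x y : X) (b b' : B) :
    Aimp g (Aimp g (x, b) (y, b')) (y, b') = (g (b' ⇨ b) (x ⇨ y) ⇨ y, (b ⇨ b') ⇨ b') := by
  simp only [Aimp, Hoop.himp_himp_self, E2g]

theorem Ajoin_mk
    (E2g : ∀ x : X, g 1 x = x)
    (E3 : ∀ (b₁ b₂ : B) (x y : X),
      f (b₁ * b₂) (x * g b₁ (x ⇨ y)) = f (b₁ * b₂) (x * (x ⇨ y)))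
    (x y : X) (b b' : B) :
    Ajoin f g (x, b) (y, b')
      = (f (hjoin b b') (hmeet (g (b' ⇨ b) (x ⇨ y) ⇨ y) (g (b ⇨ b') (y ⇨ x) ⇨ x)),
          hjoin b b') := by
  rw [Ajoin, Aimp_Aimp_mk g E2g, Aimp_Aimp_mk g E2g, Ameet_mk f g E3, hjoin]

end SemidirectProduct

theorem stmt9_general {B X : Type*} [BasicHoop B] [BasicHoop X] (f g : B → X → X)
    (E2g : ∀ x : X, g 1 x = x)
    (E3 : ∀ (b₁ b₂ : B) (x y : X),
      f (b₁ * b₂) (x * g b₁ (x ⇨ y)) = f (b₁ * b₂) (x * (x ⇨ y)))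
    (x y : X) (b b' : B) :
    Ameet f g (x, b) (y, b') = (f (hmeet b b') (hmeet x y), hmeet b b') ∧
    Ajoin f g (x, b) (y, b')
      = (f (hjoin b b') (hmeet (g (b' ⇨ b) (x ⇨ y) ⇨ y) (g (b ⇨ b') (y ⇨ x) ⇨ x)),
          hjoin b b') :=
  ⟨Ameet_mk f g E3 x y b b', Ajoin_mk f g E2g E3 x y b b'⟩

/-- For a strong external action `(f,g)` of a basic hoop `B` on a basic hoop `X`, the
lattice operations of the semidirect product `Y' = {(x,b) | f_b(x) = x}` are given by
`(x,b) ∧ (y,b') = (f_{b∧b'}(x ∧ y), b ∧ b')` and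
`(x,b) ∨ (y,b') = (f_{b∨b'}((g_{b'→b}(x → y) → y) ∧ (g_{b→b'}(y → x) → x)), b ∨ b')`. -/
theorem stmt9 {B X : Type*} [BasicHoop B] [BasicHoop X] (f g : B → X → X)
    (E1f : ∀ b : B, f b 1 = 1) (E1g : ∀ b : B, g b 1 = 1)
    (E2f : ∀ x : X, f 1 x = x) (E2g : ∀ x : X, g 1 x = x)
    (E3 : ∀ (b₁ b₂ : B) (x y : X),
      f (b₁ * b₂) (x * g b₁ (x ⇨ y)) = f (b₁ * b₂) (x * (x ⇨ y)))
    (E4 : ∀ (b₁ b₂ b₃ : B) (x y z : X),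
      g (b₃ ⇨ (b₁ * b₂)) (f (b₁ * b₂) (x * y) ⇨ z)
        = g ((b₂ ⇨ b₃) ⇨ b₁) (x ⇨ g (b₃ ⇨ b₂) (y ⇨ z)))
    (x y : X) (b b' : B)
    (hq : f b x = x) (hr : f b' y = y) :
    Ameet f g (x, b) (y, b') = (f (hmeet b b') (hmeet x y), hmeet b b') ∧
    Ajoin f g (x, b) (y, b')
      = (f (hjoin b b') (hmeet (g (b' ⇨ b) (x ⇨ y) ⇨ y) (g (b ⇨ b') (y ⇨ x) ⇨ x)),
          hjoin b b') :=
  stmt9_general f g E2g E3 x y b b'
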